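/- Let (Y,∧) be a semilattice, (X_α)_{α∈Y} a family of nonempty sets, and for each α ∈ Y let F_α : X_α^n → X_α be the n-ary extension of an abelian group operation *_α on X_α whose exponent divides n−1. Suppose that for all α, β ∈ Y with α ≥ β there is a map φ_{α,β} : X_α → X_β such that φ_{α,α} is the identity, φ_{β,γ} ∘ φ_{α,β} = φ_{α,γ} whenever α ≥ β ≥ γ, and each φ_{α,β} is a homomorphism of n-ary semigroups. Define F on the disjoint union X = ⨆_{α∈Y} X_α by F(x₁,…,xₙ) = F_α(φ_{α₁,α}(x₁),…,φ_{αₙ,α}(xₙ)) for x_i ∈ X_{α_i} and α = α₁ ∧ ⋯ ∧ αₙ. Then F is associative, symmetric and idempotent; that is, (X,F) is a symmetric n-ary band. -/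

import Mathlib

/-! Fix `μ`. On elements whose index lies above `μ`, the map `u ↦ (index of u, φ_{·,μ} u)` into
the commutative monoid `WithOne Y × X_μ` turns `F` into a plain product: the first coordinate
is the meet of the indices, and the second is a product in `X_μ` because the `φ`'s compose and
are `n`-ary homomorphisms. Taking `μ` to be the meet of all indices of a `(2n-1)`-tuple, both
bracketings have index `μ` and the same image, the product of all entries, and an element of
index `μ` is determined by its image since `φ_{μ,μ} = id`. Symmetry is commutativity of the
products, and idempotence reduces to `a ^ n = a` in each `X_α`, i.e. to the exponent dividing
`n - 1`. -/

namespace NaryBand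

variable {X : Type*}

/-- Replace the window of length `n` starting at position `i` (0-based) of the
`(2*n-1)`-tuple `x` by the value of `F` on that window. -/
def contract {n : ℕ} (F : (Fin n → X) → X) (i : ℕ) (hn : 2 ≤ n) (hi : i ≤ n - 1)
    (x : Fin (2 * n - 1) → X) : Fin n → X :=
  fun j =>
    if _h1 : (j : ℕ) < i then x ⟨(j : ℕ), by have := j.isLt; omega⟩
    else if _h2 : (j : ℕ) = i then
      F (fun k => x ⟨i + (k : ℕ), by have := k.isLt; omega⟩)
    else x ⟨(j : ℕ) + n - 1, by have := j.isLt; omega⟩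

/-- `F` is an associative `n`-ary operation. -/
def NAssoc {n : ℕ} (hn : 2 ≤ n) (F : (Fin n → X) → X) : Prop :=
  ∀ (i : ℕ) (hi : i + 1 ≤ n - 1) (x : Fin (2 * n - 1) → X),
    F (contract F i hn (by omega) x) = F (contract F (i + 1) hn (by omega) x)

/-- `F` is a symmetric `n`-ary operation. -/
def NSym {n : ℕ} (F : (Fin n → X) → X) : Prop :=
  ∀ (σ : Equiv.Perm (Fin n)) (x : Fin n → X), F (x ∘ σ) = F x

/-- `F` is an idempotent `n`-ary operation. -/
def NIdem {n : ℕ} (F : (Fin n → X) → X) : Prop :=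
  ∀ x : X, F (fun _ => x) = x

/-- The associated binary operation `B(x,y) = F(x,…,x,y)` (with `n-1` copies of `x`). -/
def assocB {n : ℕ} (F : (Fin n → X) → X) (x y : X) : X :=
  F (fun j => if (j : ℕ) < n - 1 then x else y)

/-- The map `ℓ_x : y ↦ B(x,y)`. -/
def ell {n : ℕ} (F : (Fin n → X) → X) (x : X) : X → X :=
  fun y => assocB F x y

/-- The `n`-ary extension `G^{n-1}(x₁,…,xₙ) = G(x₁, G(x₂, …, G(x_{n-1}, xₙ)…))`
of a binary operation `G`. -/
def nExt {n : ℕ} (hn : 1 ≤ n) (G : X → X → X) (x : Fin n → X) : X :=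
  (List.ofFn (fun i : Fin (n - 1) => x ⟨(i : ℕ), by have := i.isLt; omega⟩)).foldr G
    (x ⟨n - 1, by omega⟩)

/-- The relation `σ`: `x σ y` iff `B(x,y) = y` and `B(y,x) = x`. -/
def sigmaRel {n : ℕ} (F : (Fin n → X) → X) (x y : X) : Prop :=
  assocB F x y = y ∧ assocB F y x = x

/-- `(A, mul)` is an abelian group with identity `e` and inversion `inv`. -/
def IsAbelianGroup {A : Type*} (mul : A → A → A) (e : A) (inv : A → A) : Prop :=
  (∀ a b c, mul (mul a b) c = mul a (mul b c)) ∧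
  (∀ a b, mul a b = mul b a) ∧
  (∀ a, mul e a = a) ∧
  (∀ a, mul (inv a) a = e)

/-- `k`-fold product `a * ⋯ * a` with respect to `mul` (with `powMul mul e 0 a = e`). -/
def powMul {A : Type*} (mul : A → A → A) (e : A) : ℕ → A → A
  | 0, _ => e
  | k + 1, a => mul a (powMul mul e k a)

end NaryBand

namespace NaryBand

abbrev IsAbelianGroup.commMonoid {A : Type*} {mul : A → A → A} {e : A} {inv : A → A}
    (h : IsAbelianGroup mul e inv) : CommMonoid A where
  mul := mul
  one := e
  mul_assoc := h.1
  mul_comm := h.2.1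
  one_mul := h.2.2.1
  mul_one a := (h.2.1 a e).trans (h.2.2.1 a)

theorem powMul_eq_pow {M : Type*} [Monoid M] (k : ℕ) (a : M) : powMul (· * ·) 1 k a = a ^ k := by
  induction k with
  | zero => exact (pow_zero a).symm
  | succ k ih => rw [powMul, ih, pow_succ']

section NaryExtension

variable {n : ℕ}

theorem nExt_map {A B : Type*} (hn : 1 ≤ n) {G : A → A → A} {H : B → B → B} (f : A → B)
    (hf : ∀ a b, f (G a b) = H (f a) (f b)) (x : Fin n → A) :
    f (nExt hn G x) = nExt hn H (f ∘ x) := by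
  unfold nExt
  rw [← List.foldr_hom f fun a b => (hf a b).symm, ← List.foldr_map, List.map_ofFn]
  rfl

theorem nExt_const {A : Type*} (hn : 1 ≤ n) {G : A → A → A} {a : A} (ha : G a a = a) :
    nExt hn G (fun _ => a) = a := by
  rw [nExt, List.ofFn_const]
  induction n - 1 with
  | zero => rfl
  | succ k ih => rw [List.replicate_succ, List.foldr_cons, ih, ha]

theorem nExt_mul_eq_prod {M : Type*} [CommMonoid M] (hn : 1 ≤ n) (x : Fin n → M) :
    nExt hn (· * ·) x = ∏ i, x i := by
  obtain ⟨m, rfl⟩ : ∃ m, n = m + 1 := ⟨n - 1, by omega⟩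
  have foldr_mul : ∀ (l : List M) (b : M), l.foldr (· * ·) b = l.prod * b := by
    intro l b
    induction l with
    | nil => simp
    | cons a l ih => rw [List.foldr_cons, ih, List.prod_cons, mul_assoc]
  rw [nExt, foldr_mul, List.prod_ofFn, Fin.prod_univ_castSucc]
  rfl

end NaryExtension

section Band

variable {S : Type*} [CommSemigroup S] {n : ℕ}

theorem coe_nExt (hn : 1 ≤ n) (x : Fin n → S) :
    ((nExt hn (· * ·) x : S) : WithOne S) = ∏ i, (x i : WithOne S) := by
  rw [nExt_map hn _ WithOne.coe_mul, nExt_mul_eq_prod]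
  rfl

theorem nExt_comp_perm (hn : 1 ≤ n) (σ : Equiv.Perm (Fin n)) (x : Fin n → S) :
    nExt hn (· * ·) (x ∘ σ) = nExt hn (· * ·) x :=
  WithOne.coe_injective <| by
    rw [coe_nExt, coe_nExt]
    exact Equiv.prod_comp σ fun i => (x i : WithOne S)

theorem mul_nExt_eq_nExt (hidem : ∀ a : S, a * a = a) (hn : 1 ≤ n) (x : Fin n → S)
    (i : Fin n) : x i * nExt hn (· * ·) x = nExt hn (· * ·) x :=
  WithOne.coe_injective <| by
    classical
    rw [WithOne.coe_mul, coe_nExt, ← Finset.mul_prod_erase _ _ (Finset.mem_univ i), ← mul_assoc,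
      ← WithOne.coe_mul, hidem]

theorem nExt_mul_eq_of_forall (hn : 1 ≤ n) (x : Fin n → S) {c : S} (hc : ∀ i, x i * c = c) :
    nExt hn (· * ·) x * c = c :=
  WithOne.coe_injective <| by
    rw [WithOne.coe_mul, coe_nExt]
    refine Finset.prod_induction _ (fun a => a * (c : WithOne S) = c) ?_ (one_mul _) ?_
    · intro a b ha hb
      rw [mul_assoc, hb, ha]
    · intro i _
      rw [← WithOne.coe_mul, hc]

end Band

section Contraction

open Finset

variable {X M : Type*} {n i : ℕ} (hn : 2 ≤ n) (hi : i ≤ n - 1)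

theorem contract_mem (F : (Fin n → X) → X) (P : X → Prop)
    (hP : ∀ y, (∀ k, P (y k)) → P (F y)) (x : Fin (2 * n - 1) → X) (hx : ∀ m, P (x m))
    (j : Fin n) : P (contract F i hn hi x j) := by
  unfold contract
  split_ifs
  exacts [hx _, hP _ fun _ => hx _, hx _]

theorem comp_contract {Z : Type*} (F : (Fin n → X) → X) (G : (Fin n → Z) → Z) (f : X → Z)
    (P : X → Prop) (hf : ∀ y, (∀ k, P (y k)) → f (F y) = G (f ∘ y))
    (x : Fin (2 * n - 1) → X) (hx : ∀ m, P (x m)) :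
    f ∘ contract F i hn hi x = contract G i hn hi (f ∘ x) := by
  funext j
  simp only [Function.comp_apply, contract]
  split_ifs
  · rfl
  · exact hf _ fun _ => hx _
  · rfl

omit hn hi in
theorem prod_range_contract [CommMonoid M] (hi : i < n) (g : ℕ → M) :
    ∏ j ∈ range n,
      (if j < i then g j else if j = i then ∏ k ∈ range n, g (i + k) else g (j + n - 1)) =
    ∏ m ∈ range (2 * n - 1), g m := by
  obtain ⟨r, rfl⟩ : ∃ r, n = i + 1 + r := ⟨n - 1 - i, by omega⟩
  set h : ℕ → M := fun j => if j < i then g j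
    else if j = i then ∏ k ∈ range (i + 1 + r), g (i + k) else g (j + (i + 1 + r) - 1)
  rw [prod_range_add h, prod_range_succ h, show 2 * (i + 1 + r) - 1 = i + (i + 1 + r) + r by omega,
    prod_range_add g _ r, prod_range_add g i]
  congr 2
  · exact prod_congr rfl fun j hj => if_pos (mem_range.mp hj)
  · simp only [h, lt_irrefl, if_false, if_true]
  · funext j
    dsimp only [h]
    rw [if_neg (by omega), if_neg (by omega)]
    congr 1
    omega

theorem prod_contract_prod [CommMonoid M] (x : Fin (2 * n - 1) → M) :
    ∏ j, contract (fun y : Fin n → M => ∏ k, y k) i hn hi x j = ∏ m, x m := by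
  have prod_eq_range : ∀ {N} (y : Fin N → M) (g : ℕ → M), (∀ m : Fin N, y m = g m) →
      ∏ m, y m = ∏ m ∈ range N, g m := fun {N} y g h => by
    rw [← Fin.prod_univ_eq_prod_range]
    exact prod_congr rfl fun m _ => h m
  obtain ⟨g, hg⟩ : ∃ g : ℕ → M, ∀ m, x m = g m :=
    ⟨fun m => if h : m < 2 * n - 1 then x ⟨m, h⟩ else 1, fun m => by simp⟩
  rw [prod_eq_range x g hg, ← prod_range_contract (n := n) (i := i) (by omega)]
  refine prod_eq_range _ _ fun j => ?_
  unfold contract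
  split_ifs
  exacts [hg _, prod_eq_range _ _ fun _ => hg _, hg _]

theorem apply_contract_eq_prod [CommMonoid M] (F : (Fin n → X) → X) (f : X → M)
    (P : X → Prop) (hP : ∀ y, (∀ k, P (y k)) → P (F y))
    (hf : ∀ y, (∀ k, P (y k)) → f (F y) = ∏ k, f (y k))
    (x : Fin (2 * n - 1) → X) (hx : ∀ m, P (x m)) :
    f (F (contract F i hn hi x)) = ∏ m, f (x m) := by
  rw [hf _ (contract_mem hn hi F P hP x hx)]
  calc ∏ j, f (contract F i hn hi x j)
      = ∏ j, contract (fun y : Fin n → M => ∏ k, y k) i hn hi (f ∘ x) j := by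
        rw [← comp_contract hn hi F _ f P hf x hx]
        rfl
    _ = ∏ m, f (x m) := prod_contract_prod hn hi (f ∘ x)

end Contraction

section StrongSemilattice

variable {Y : Type*} [CommSemigroup Y] {Xf : Y → Type*} [∀ α, CommMonoid (Xf α)] {n : ℕ}
  (φ : ∀ α β, Xf α → Xf β)

def strongSemilatticeOp (hn : 1 ≤ n) (xs : Fin n → Σ α, Xf α) : Σ α, Xf α :=
  ⟨nExt hn (· * ·) fun i => (xs i).1, ∏ i, φ (xs i).1 _ (xs i).2⟩

theorem strongSemilatticeOp_eq_mk (hn : 1 ≤ n) {xs : Fin n → Σ α, Xf α} {μ : Y}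
    (h : nExt hn (· * ·) (fun i => (xs i).1) = μ) :
    strongSemilatticeOp φ hn xs = ⟨μ, ∏ i, φ (xs i).1 μ (xs i).2⟩ := by
  subst h
  rfl

theorem nSym_strongSemilatticeOp (hn : 1 ≤ n) : NSym (strongSemilatticeOp φ hn) := by
  intro σ x
  refine (strongSemilatticeOp_eq_mk φ hn (nExt_comp_perm hn σ fun i => (x i).1)).trans ?_
  exact congrArg (Sigma.mk _) (Equiv.prod_comp σ fun i => φ (x i).1 _ (x i).2)

theorem nIdem_strongSemilatticeOp (hn : 1 ≤ n) (hidem : ∀ a : Y, a * a = a)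
    (hid : ∀ α, φ α α = id) (hpow : ∀ α (b : Xf α), b ^ n = b) :
    NIdem (strongSemilatticeOp φ hn) := by
  rintro ⟨α, b⟩
  rw [strongSemilatticeOp_eq_mk φ hn (nExt_const hn (hidem α))]
  simp only [hid, id, Fin.prod_const, hpow]

def fiberProj (μ : Y) (u : Σ α, Xf α) : WithOne Y × Xf μ :=
  (u.1, φ u.1 μ u.2)

omit [CommSemigroup Y] [∀ α, CommMonoid (Xf α)] in
theorem eq_of_fiberProj_eq (hid : ∀ α, φ α α = id) {μ : Y} {u v : Σ α, Xf α} (hu : u.1 = μ)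
    (h : fiberProj φ μ u = fiberProj φ μ v) : u = v := by
  obtain ⟨α, a⟩ := u
  obtain ⟨β, b⟩ := v
  simp only [fiberProj, Prod.mk.injEq, WithOne.coe_inj] at h hu
  obtain ⟨rfl, h⟩ := h
  subst hu
  rw [hid] at h
  exact congrArg _ h

theorem fiberProj_strongSemilatticeOp (hn : 1 ≤ n) (hidem : ∀ a : Y, a * a = a)
    (hcomp : ∀ α β γ, α * β = β → β * γ = γ → φ β γ ∘ φ α β = φ α γ)
    (hhom : ∀ α β, α * β = β → ∀ xs : Fin n → Xf α, φ α β (∏ i, xs i) = ∏ i, φ α β (xs i))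
    {μ : Y} (y : Fin n → Σ α, Xf α) (hy : ∀ k, (y k).1 * μ = μ) :
    fiberProj φ μ (strongSemilatticeOp φ hn y) = ∏ k, fiberProj φ μ (y k) := by
  set β : Y := nExt hn (· * ·) fun k => (y k).1
  have hβ : β * μ = μ := nExt_mul_eq_of_forall hn _ hy
  have hyβ : ∀ k, (y k).1 * β = β := mul_nExt_eq_nExt hidem hn _
  ext
  · rw [Prod.fst_prod]
    exact coe_nExt hn fun k => (y k).1
  · rw [Prod.snd_prod]
    show φ β μ (∏ k, φ (y k).1 β (y k).2) = ∏ k, φ (y k).1 μ (y k).2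
    rw [hhom β μ hβ]
    exact Finset.prod_congr rfl fun k _ => congrFun (hcomp _ _ _ (hyβ k) hβ) _

theorem nAssoc_strongSemilatticeOp (hn : 2 ≤ n) (hidem : ∀ a : Y, a * a = a)
    (hid : ∀ α, φ α α = id)
    (hcomp : ∀ α β γ, α * β = β → β * γ = γ → φ β γ ∘ φ α β = φ α γ)
    (hhom : ∀ α β, α * β = β → ∀ xs : Fin n → Xf α, φ α β (∏ i, xs i) = ∏ i, φ α β (xs i)) :
    NAssoc hn (strongSemilatticeOp φ (Nat.le_of_succ_le hn)) := by
  intro i hi x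
  have hn₁ : 1 ≤ n := Nat.le_of_succ_le hn
  set μ := nExt (by omega : 1 ≤ 2 * n - 1) (· * ·) fun m => (x m).1
  have key : ∀ j (hj : j ≤ n - 1),
      fiberProj φ μ (strongSemilatticeOp φ hn₁ (contract (strongSemilatticeOp φ hn₁) j hn hj x)) =
        ∏ m, fiberProj φ μ (x m) := fun j hj =>
    apply_contract_eq_prod hn hj _ _ (fun u => u.1 * μ = μ)
      (fun y hy => nExt_mul_eq_of_forall hn₁ _ hy)
      (fun y hy => fiberProj_strongSemilatticeOp φ hn₁ hidem hcomp hhom y hy) x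
      (mul_nExt_eq_nExt hidem _ _)
  refine eq_of_fiberProj_eq φ hid (WithOne.coe_injective ?_) ((key i _).trans (key (i + 1) hi).symm)
  rw [coe_nExt]
  exact (congrArg Prod.fst (key i _)).trans Prod.fst_prod

end StrongSemilattice

end NaryBand

open NaryBand

/-- A strong `n`-ary semilattice of `n`-ary extensions of abelian
groups whose exponents divide `n-1` is a symmetric `n`-ary band. -/
theorem stmt_15 {Y : Type*} {Xf : Y → Type*} {n : ℕ} (hn : 2 ≤ n)
    (meet : Y → Y → Y)
    (hassoc : ∀ a b c, meet (meet a b) c = meet a (meet b c))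
    (hcomm : ∀ a b, meet a b = meet b a)
    (hidem : ∀ a, meet a a = a)
    (mulA : ∀ α, Xf α → Xf α → Xf α) (eA : ∀ α, Xf α) (invA : ∀ α, Xf α → Xf α)
    (hgrp : ∀ α, IsAbelianGroup (mulA α) (eA α) (invA α))
    (hexp : ∀ α (a : Xf α), powMul (mulA α) (eA α) (n - 1) a = eA α)
    (Fa : ∀ α, (Fin n → Xf α) → Xf α)
    (hFaDef : ∀ α, Fa α = nExt (show 1 ≤ n by omega) (mulA α))
    (φ : ∀ α β, Xf α → Xf β)
    (hid : ∀ α, φ α α = id)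
    (hcomp : ∀ α β γ, meet α β = β → meet β γ = γ → φ β γ ∘ φ α β = φ α γ)
    (hhom : ∀ α β, meet α β = β → ∀ xs : Fin n → Xf α,
      φ α β (Fa α xs) = Fa β (fun i => φ α β (xs i)))
    (F : (Fin n → Σ α, Xf α) → Σ α, Xf α)
    (hFdef : ∀ xs : Fin n → Σ α, Xf α,
      F xs = ⟨nExt (show 1 ≤ n by omega) meet (fun i => (xs i).1),
        Fa _ (fun i => φ (xs i).1 _ (xs i).2)⟩) :
    NAssoc hn F ∧ NSym F ∧ NIdem F := by
  let _ : CommSemigroup Y := { mul := meet, mul_assoc := hassoc, mul_comm := hcomm }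
  let _ : ∀ α, CommMonoid (Xf α) := fun α => (hgrp α).commMonoid
  have hFa : ∀ α xs, Fa α xs = ∏ i, xs i := fun α xs =>
    (congrFun (hFaDef α) xs).trans (nExt_mul_eq_prod _ xs)
  obtain rfl : F = strongSemilatticeOp φ (by omega) := funext fun xs => by rw [hFdef, hFa]; rfl
  have hpow : ∀ α (b : Xf α), b ^ n = b := fun α b => by
    have hexp' : b ^ (n - 1) = 1 := (powMul_eq_pow (n - 1) b).symm.trans (hexp α b)
    rw [← Nat.sub_add_cancel (by omega : 1 ≤ n), pow_succ, hexp', one_mul]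
  exact ⟨nAssoc_strongSemilatticeOp φ hn hidem hid hcomp
      (fun α β h xs => by rw [← hFa, hhom α β h, hFa]),
    nSym_strongSemilatticeOp φ _, nIdem_strongSemilatticeOp φ _ hidem hid hpow⟩
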